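/- arXiv:2305.08856 — 4 statements merged into one kernel-verified Lean document; each statement's English description precedes it below -/
import Mathlib

section
/- Let (X,d) be an f-compact asymmetric space in which f-convergence implies b-convergence, and let T : X → X be an f-shrinkage map (d(Tx,Ty) < d(x,y) for x ≠ y). Then the function g : X → ℝ given by g(z) = d(z, Tz) is continuous from the forward topology on X to the usual topology on ℝ. -/
open Filter Topology

/-- for an f-shrinkage map T on an f-compact asymmetric space in
which f-convergence implies b-convergence, g(z) = d(z,Tz) is f-continuous. -/
theorem fShrinkage_displacement_continuous {X : Type*} (d : X → X → ℝ)
    (h_nonneg : ∀ x y, 0 ≤ d x y)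
    (h_eq : ∀ x y, (d x y = 0 ∧ d y x = 0) ↔ x = y)
    (h_tri : ∀ x y z, d x z ≤ d x y + d y z)
    (tf : TopologicalSpace X)
    (htf : tf = TopologicalSpace.generateFrom
      {s : Set X | ∃ x r, s = {u | d x u < r}})
    (h_compact : @CompactSpace X tf)
    (h_fb : ∀ (u : ℕ → X) (x : X),
      Tendsto (fun n => d x (u n)) atTop (𝓝 0) →
      Tendsto (fun n => d (u n) x) atTop (𝓝 0))
    (T : X → X)
    (h_shrink : ∀ x y, x ≠ y → d (T x) (T y) < d x y) :
    @Continuous X ℝ tf _ (fun z => d z (T z)) := by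
  letI : TopologicalSpace X := tf
  have hdd : ∀ x, d x x = 0 := fun x => ((h_eq x x).mpr rfl).1
  have hTle : ∀ x y, d (T x) (T y) ≤ d x y := by
    intro x y
    by_cases hxy : x = y
    · subst hxy; simp [hdd]
    · exact (h_shrink x y hxy).le
  -- key: forward-small implies backward-small
  have key : ∀ (z : X) (ε : ℝ), 0 < ε → ∃ δ > 0, ∀ u, d z u < δ → d u z < ε := by
    intro z ε hε
    by_contra h
    push_neg at h
    have hch : ∀ n : ℕ, ∃ u : X, d z u < 1 / (n + 1) ∧ ε ≤ d u z := by
      intro n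
      obtain ⟨u, hu1, hu2⟩ := h (1 / (n + 1)) (by positivity)
      exact ⟨u, hu1, hu2⟩
    choose u hu1 hu2 using hch
    have hf : Tendsto (fun n => d z (u n)) atTop (𝓝 0) := by
      apply squeeze_zero (fun n => h_nonneg z (u n)) (fun n => (hu1 n).le)
      exact tendsto_one_div_add_atTop_nhds_zero_nat
    have hb := h_fb u z hf
    have : ε ≤ 0 := ge_of_tendsto hb (Eventually.of_forall hu2)
    linarith
  rw [continuous_iff_continuousAt]
  intro z
  rw [ContinuousAt, Metric.tendsto_nhds]
  intro ε hε
  obtain ⟨δ, hδ, hδ'⟩ := key z (ε / 2) (by linarith)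
  have hopen : IsOpen {u | d z u < min δ (ε / 2)} := by
    show IsOpen[tf] _
    rw [htf]; exact .basic _ ⟨z, min δ (ε / 2), rfl⟩
  have hz : z ∈ {u | d z u < min δ (ε / 2)} := by
    simp only [Set.mem_setOf_eq, hdd, lt_min_iff]
    exact ⟨hδ, by linarith⟩
  filter_upwards [hopen.mem_nhds hz] with u hu
  have h1 : d z u < min δ (ε / 2) := hu
  have h2 : d u z < ε / 2 := hδ' u (lt_of_lt_of_le h1 (min_le_left _ _))
  have h3 : d z u < ε / 2 := lt_of_lt_of_le h1 (min_le_right _ _)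
  have t1 : d u (T u) ≤ d u z + (d z (T z) + d (T z) (T u)) :=
    le_trans (h_tri u z (T u)) (by linarith [h_tri z (T z) (T u)])
  have t2 : d z (T z) ≤ d z u + (d u (T u) + d (T u) (T z)) :=
    le_trans (h_tri z u (T z)) (by linarith [h_tri u (T u) (T z)])
  have s1 := hTle z u
  have s2 := hTle u z
  have : |d u (T u) - d z (T z)| < ε := by
    rw [abs_sub_lt_iff]; constructor <;> linarith
  simpa [Real.dist_eq] using this
end

section
/- Let (X,‖·|) be an asymmetric normed space with induced asymmetric distance d(x,y) = ‖y−x|, let K ⊆ X be a nonempty convex subset that is f-compact (compact in the forward topology of d), and suppose f-convergence implies b-convergence in X. If T : K → K is f-non-expansive, i.e. ‖Ty − Tx| ≤ ‖y − x| for all x,y ∈ K, then T has a fixed point in K. -/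
/-!
Perturb `T` towards a base point `x₀ ∈ K`: by convexity `(1 - ε) • T + ε • x₀` is a
`(1 - ε)`-contraction of `K`, whose iterates give approximate fixed points of it. A forward
cluster point of such a sequence in the compact set `K` is a genuine fixed point, because
f-convergence upgrades to b-convergence and then the triangle inequality applies in both
directions. The fixed points `v` of these contractions satisfy `T v - v = ε • (T v - x₀)`, and
`K` is forward bounded, so they are approximate fixed points of `T`; the same compactness
argument then produces a fixed point of `T`.
-/

open Filter Topology

section AsymmNorm

variable {X : Type*} [AddCommGroup X]

lemma upperSemicontinuous_map_sub [TopologicalSpace X] {n : X → ℝ}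
    (hball : ∀ x r, IsOpen {u : X | n (u - x) < r}) (x : X) :
    UpperSemicontinuous fun u => n (u - x) :=
  upperSemicontinuous_iff_isOpen_preimage.2 (hball x)

def FConvImpliesBConv (n : X → ℝ) : Prop :=
  ∀ (u : ℕ → X) (x : X),
    Tendsto (fun k => n (u k - x)) atTop (𝓝 0) → Tendsto (fun k => n (x - u k)) atTop (𝓝 0)

variable [Module ℝ X]

structure IsAsymmNorm (n : X → ℝ) : Prop where
  nonneg : ∀ x, 0 ≤ n x
  eq_zero_iff : ∀ x, (n x = 0 ∧ n (-x) = 0) ↔ x = 0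
  smul_of_nonneg : ∀ l : ℝ, 0 ≤ l → ∀ x, n (l • x) = l * n x
  add_le : ∀ x y, n (x + y) ≤ n x + n y

namespace IsAsymmNorm

variable {n : X → ℝ}

lemma map_zero (hn : IsAsymmNorm n) : n 0 = 0 :=
  ((hn.eq_zero_iff 0).2 rfl).1

lemma map_sub_le_add (hn : IsAsymmNorm n) (a b c : X) : n (a - c) ≤ n (a - b) + n (b - c) := by
  simpa using hn.add_le (a - b) (b - c)

lemma eq_of_map_sub_eq_zero (hn : IsAsymmNorm n) (hfb : FConvImpliesBConv n) {a b : X}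
    (h : n (b - a) = 0) : b = a := by
  have hback : n (a - b) = 0 :=
    tendsto_nhds_unique tendsto_const_nhds (hfb (fun _ => b) a (by simp [h]))
  exact sub_eq_zero.1 ((hn.eq_zero_iff _).1 ⟨h, by rwa [neg_sub]⟩)

lemma map_sub_self_eq_zero_of_tendsto (hn : IsAsymmNorm n) {K : Set X} {S : X → X}
    (hS : ∀ x ∈ K, ∀ y ∈ K, n (S y - S x) ≤ n (y - x)) {u : ℕ → X} (hu : ∀ k, u k ∈ K)
    {z : X} (hz : z ∈ K) (hf : Tendsto (fun k => n (u k - z)) atTop (𝓝 0))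
    (hb : Tendsto (fun k => n (z - u k)) atTop (𝓝 0))
    (hreg : Tendsto (fun k => n (S (u k) - u k)) atTop (𝓝 0)) :
    n (S z - z) = 0 := by
  have hbound : ∀ k, n (S z - z) ≤ n (z - u k) + n (S (u k) - u k) + n (u k - z) := fun k =>
    calc n (S z - z) ≤ n (S z - S (u k)) + n (S (u k) - u k) + n (u k - z) := by
          linarith [hn.map_sub_le_add (S z) (u k) z, hn.map_sub_le_add (S z) (S (u k)) (u k)]
      _ ≤ n (z - u k) + n (S (u k) - u k) + n (u k - z) := by
          gcongr
          exact hS _ (hu k) _ hz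
  have hlim := (hb.add hreg).add hf
  simp only [add_zero] at hlim
  exact le_antisymm (ge_of_tendsto hlim (Eventually.of_forall hbound)) (hn.nonneg _)

variable [TopologicalSpace X]

lemma exists_subseq_tendsto_of_isCompact (hn : IsAsymmNorm n)
    (hball : ∀ x r, IsOpen {u : X | n (u - x) < r}) {K : Set X} (hK : IsCompact K)
    {u : ℕ → X} (hu : ∀ k, u k ∈ K) :
    ∃ z ∈ K, ∃ φ : ℕ → ℕ, StrictMono φ ∧ Tendsto (fun k => n (u (φ k) - z)) atTop (𝓝 0) := by
  obtain ⟨z, hzK, hz⟩ :=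
    hK.exists_clusterPt (f := map u atTop) (tendsto_principal.2 (Eventually.of_forall hu))
  have hfreq : ∀ k : ℕ, ∃ᶠ m in atTop, n (u m - z) < 1 / (k + 1) := fun k =>
    mapClusterPt_iff_frequently.1 hz _ <|
      (hball z _).mem_nhds (by rw [Set.mem_ofPred_eq, sub_self, hn.map_zero]; positivity)
  obtain ⟨φ, hφ_mono, hφ⟩ := extraction_forall_of_frequently hfreq
  exact ⟨z, hzK, φ, hφ_mono, squeeze_zero (fun k => hn.nonneg _) (fun k => (hφ k).le)
    tendsto_one_div_add_atTop_nhds_zero_nat⟩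

theorem exists_fixedPoint_of_tendsto_map_sub_self (hn : IsAsymmNorm n)
    (hfb : FConvImpliesBConv n) (hball : ∀ x r, IsOpen {u : X | n (u - x) < r})
    {K : Set X} (hK : IsCompact K) {S : X → X}
    (hS : ∀ x ∈ K, ∀ y ∈ K, n (S y - S x) ≤ n (y - x)) {u : ℕ → X} (hu : ∀ k, u k ∈ K)
    (hreg : Tendsto (fun k => n (S (u k) - u k)) atTop (𝓝 0)) :
    ∃ z ∈ K, S z = z := by
  obtain ⟨z, hzK, φ, hφ_mono, hφ⟩ := hn.exists_subseq_tendsto_of_isCompact hball hK hu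
  refine ⟨z, hzK, hn.eq_of_map_sub_eq_zero hfb ?_⟩
  exact hn.map_sub_self_eq_zero_of_tendsto hS (fun k => hu (φ k)) hzK hφ (hfb _ z hφ)
    (hreg.comp hφ_mono.tendsto_atTop)

theorem exists_fixedPoint_of_contraction (hn : IsAsymmNorm n) (hfb : FConvImpliesBConv n)
    (hball : ∀ x r, IsOpen {u : X | n (u - x) < r}) {K : Set X} (hK_ne : K.Nonempty)
    (hK : IsCompact K) {S : X → X} (hS_maps : Set.MapsTo S K K) {c : ℝ} (hc0 : 0 ≤ c)
    (hc1 : c < 1) (hS : ∀ x ∈ K, ∀ y ∈ K, n (S y - S x) ≤ c * n (y - x)) :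
    ∃ z ∈ K, S z = z := by
  obtain ⟨x₀, hx₀⟩ := hK_ne
  have hu : ∀ k, S^[k] x₀ ∈ K := fun k => hS_maps.iterate k hx₀
  have hstep : ∀ k, n (S (S^[k] x₀) - S^[k] x₀) ≤ c ^ k * n (S x₀ - x₀) := by
    intro k
    induction k with
    | zero => simp
    | succ k ih =>
      rw [Function.iterate_succ_apply']
      calc n (S (S (S^[k] x₀)) - S (S^[k] x₀)) ≤ c * n (S (S^[k] x₀) - S^[k] x₀) :=
            hS _ (hu k) _ (hS_maps (hu k))
        _ ≤ c * (c ^ k * n (S x₀ - x₀)) := mul_le_mul_of_nonneg_left ih hc0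
        _ = c ^ (k + 1) * n (S x₀ - x₀) := by ring
  have hS_nonexp : ∀ x ∈ K, ∀ y ∈ K, n (S y - S x) ≤ n (y - x) := fun x hx y hy =>
    (hS x hx y hy).trans (mul_le_of_le_one_left (hn.nonneg _) hc1.le)
  refine hn.exists_fixedPoint_of_tendsto_map_sub_self hfb hball hK hS_nonexp hu ?_
  refine squeeze_zero (fun k => hn.nonneg _) hstep ?_
  simpa using (tendsto_pow_atTop_nhds_zero_of_lt_one hc0 hc1).mul_const (n (S x₀ - x₀))

theorem exists_map_sub_self_le_of_convex (hn : IsAsymmNorm n) (hfb : FConvImpliesBConv n)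
    (hball : ∀ x r, IsOpen {u : X | n (u - x) < r}) {K : Set X} (hK_conv : Convex ℝ K)
    (hK : IsCompact K) {T : X → X} (hT_maps : Set.MapsTo T K K)
    (hT : ∀ x ∈ K, ∀ y ∈ K, n (T y - T x) ≤ n (y - x)) {x₀ : X} (hx₀ : x₀ ∈ K) {M : ℝ}
    (hM : ∀ u ∈ K, n (u - x₀) ≤ M) {ε : ℝ} (hε0 : 0 < ε) (hε1 : ε ≤ 1) :
    ∃ v ∈ K, n (T v - v) ≤ ε * M := by
  set S : X → X := fun x => (1 - ε) • T x + ε • x₀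
  have hS_maps : Set.MapsTo S K K := fun x hx =>
    hK_conv (hT_maps hx) hx₀ (by linarith) hε0.le (by ring)
  have hS : ∀ x ∈ K, ∀ y ∈ K, n (S y - S x) ≤ (1 - ε) * n (y - x) := by
    intro x hx y hy
    have hdiff : S y - S x = (1 - ε) • (T y - T x) := by
      simp only [S, smul_sub]
      abel
    rw [hdiff, hn.smul_of_nonneg _ (by linarith)]
    exact mul_le_mul_of_nonneg_left (hT x hx y hy) (by linarith)
  obtain ⟨v, hvK, hv⟩ := hn.exists_fixedPoint_of_contraction hfb hball ⟨x₀, hx₀⟩ hK hS_maps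
    (by linarith) (by linarith) hS
  have hdiff : T v - v = ε • (T v - x₀) := by
    nth_rewrite 2 [← hv]
    simp only [S, smul_sub, sub_smul, one_smul]
    abel
  refine ⟨v, hvK, ?_⟩
  rw [hdiff, hn.smul_of_nonneg _ hε0.le]
  exact mul_le_mul_of_nonneg_left (hM _ (hT_maps hvK)) hε0.le

end IsAsymmNorm

end AsymmNorm

/-- Schauder type: an f-non-expansive self-map of a nonempty
convex f-compact subset of an asymmetric normed space (in which f-convergence
implies b-convergence) has a fixed point. -/
theorem fixedPoint_schauder {X : Type*} [AddCommGroup X] [Module ℝ X]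
    (n : X → ℝ)
    (h_nonneg : ∀ x, 0 ≤ n x)
    (h_eq : ∀ x, (n x = 0 ∧ n (-x) = 0) ↔ x = 0)
    (h_hom : ∀ (l : ℝ), 0 ≤ l → ∀ x, n (l • x) = l * n x)
    (h_sub : ∀ x y, n (x + y) ≤ n x + n y)
    (tf : TopologicalSpace X)
    (htf : tf = TopologicalSpace.generateFrom
      {s : Set X | ∃ x r, s = {u | n (u - x) < r}})
    (h_fb : ∀ (u : ℕ → X) (x : X),
      Tendsto (fun k => n (u k - x)) atTop (𝓝 0) →
      Tendsto (fun k => n (x - u k)) atTop (𝓝 0))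
    (K : Set X) (hK_ne : K.Nonempty) (hK_conv : Convex ℝ K)
    (hK_cpt : @IsCompact X tf K)
    (T : X → X) (hT_maps : Set.MapsTo T K K)
    (hT_nonexp : ∀ x ∈ K, ∀ y ∈ K, n (T y - T x) ≤ n (y - x)) :
    ∃ x ∈ K, T x = x := by
  have hball : ∀ x r, IsOpen[tf] {u : X | n (u - x) < r} := fun x r => by
    subst htf
    exact TopologicalSpace.isOpen_generateFrom_of_mem ⟨x, r, rfl⟩
  let _ := tf
  have hn : IsAsymmNorm n := ⟨h_nonneg, h_eq, h_hom, h_sub⟩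
  obtain ⟨x₀, hx₀⟩ := hK_ne
  obtain ⟨M, hM⟩ :=
    ((upperSemicontinuous_map_sub hball x₀).upperSemicontinuousOn K).bddAbove_of_isCompact
      hK_cpt
  have happrox : ∀ m : ℕ, ∃ v ∈ K, n (T v - v) ≤ 1 / ((m : ℝ) + 1) * M := fun m =>
    hn.exists_map_sub_self_le_of_convex h_fb hball hK_conv hK_cpt hT_maps hT_nonexp hx₀
      (fun u hu => hM ⟨u, hu, rfl⟩) Nat.one_div_pos_of_nat
      (div_le_one_of_le₀ (by linarith [m.cast_nonneg (α := ℝ)]) (by positivity))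
  choose v hvK hv using happrox
  refine hn.exists_fixedPoint_of_tendsto_map_sub_self h_fb hball hK_cpt hT_nonexp hvK ?_
  refine squeeze_zero (fun m => hn.nonneg _) hv ?_
  simpa using tendsto_one_div_add_atTop_nhds_zero_nat.mul_const M
end

section
/- Let X be an f-Banach asymmetric normed space, K ⊆ X nonempty, convex, f-closed and f-bounded, with f-convergence implying b-convergence. If T : K → K is f-non-expansive and (T − I)(K) is f-closed in X, then T has a fixed point in K. -/
/-!
For `x₀ ∈ K` and `0 ≤ t < 1` the averaged map `S_t x = (1 - t) x₀ + t T x` is a `t`-contraction of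
`K` into itself, and `T x - S_t x = (1 - t) (T x - x₀)` is small for `t` near `1` because `K` is
bounded. Along the iterates of `S_t` the steps `S_t x - x` decay geometrically, so `‖T x - x|` takes
arbitrarily small values on `K`; as `(T - I)(K)` is f-closed, it contains `0`.
-/

open Filter Topology

lemma exists_one_sub_mul_add_pow_mul_lt {M ε : ℝ} (hM : 0 ≤ M) (hε : 0 < ε) :
    ∃ t : ℝ, 0 ≤ t ∧ t ≤ 1 ∧ ∃ k : ℕ, (1 - t) * M + t ^ k * M < ε := by
  set δ := min 1 (ε / (2 * (M + 1)))
  have hδ : 0 < δ := lt_min one_pos (by positivity)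
  have hδ1 : δ ≤ 1 := min_le_left _ _
  have hδM : δ * M < ε / 2 := by
    calc δ * M ≤ ε / (2 * (M + 1)) * M := mul_le_mul_of_nonneg_right (min_le_right _ _) hM
      _ < ε / 2 := by rw [div_mul_eq_mul_div, div_lt_div_iff₀ (by positivity) two_pos]; nlinarith
  have hpow : Tendsto (fun k : ℕ => (1 - δ) ^ k * M) atTop (𝓝 (0 * M)) :=
    (tendsto_pow_atTop_nhds_zero_of_lt_one (by linarith) (by linarith)).mul_const M
  obtain ⟨k, hk⟩ := (hpow.eventually (gt_mem_nhds (by linarith : 0 * M < ε / 2))).exists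
  exact ⟨1 - δ, by linarith, by linarith, k, by rw [sub_sub_cancel]; linarith⟩

section AsymmetricNorm

variable {X : Type*} [AddCommGroup X] {n : X → ℝ}

abbrev forwardTopology (n : X → ℝ) : TopologicalSpace X :=
  TopologicalSpace.generateFrom {s : Set X | ∃ x r, s = {u | n (u - x) < r}}

lemma tendsto_forwardTopology_nhds (h_sub : ∀ x y, n (x + y) ≤ n x + n y)
    {ι : Type*} {l : Filter ι} {u : ι → X} {x : X}
    (hu : ∀ δ > 0, ∀ᶠ i in l, n (u i - x) < δ) :
    Tendsto u l (@nhds X (forwardTopology n) x) := by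
  rw [forwardTopology, TopologicalSpace.tendsto_nhds_generateFrom_iff]
  rintro s ⟨y, r, rfl⟩ (hx : n (x - y) < r)
  filter_upwards [hu _ (sub_pos.mpr hx)] with i hi
  have := h_sub (u i - x) (x - y)
  rw [sub_add_sub_cancel] at this
  show n (u i - y) < r
  linarith

lemma mem_of_isClosed_forwardTopology (h_sub : ∀ x y, n (x + y) ≤ n x + n y) {S : Set X}
    (hS : IsClosed[forwardTopology n] S) {x : X}
    (hx : ∀ ε > 0, ∃ s ∈ S, n (s - x) < ε) : x ∈ S := by
  choose s hsS hs using fun j : ℕ => hx (1 / (j + 1)) Nat.one_div_pos_of_nat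
  let := forwardTopology n
  refine hS.mem_of_tendsto (b := atTop) (tendsto_forwardTopology_nhds h_sub fun δ hδ => ?_)
    (Eventually.of_forall hsS)
  filter_upwards [tendsto_one_div_add_atTop_nhds_zero_nat.eventually (gt_mem_nhds hδ)] with j hj
  exact (hs j).trans hj

lemma iterate_succ_sub_iterate_le {K : Set X} {S : X → X} {t : ℝ} (ht : 0 ≤ t)
    (hS_maps : Set.MapsTo S K K) (hS : ∀ x ∈ K, ∀ y ∈ K, n (S y - S x) ≤ t * n (y - x))
    {x : X} (hx : x ∈ K) (k : ℕ) :
    n (S^[k + 1] x - S^[k] x) ≤ t ^ k * n (S x - x) := by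
  induction k with
  | zero => simp
  | succ k ih =>
    calc n (S^[k + 2] x - S^[k + 1] x)
        = n (S (S^[k + 1] x) - S (S^[k] x)) := by simp only [Function.iterate_succ_apply']
      _ ≤ t * n (S^[k + 1] x - S^[k] x) :=
          hS _ (hS_maps.iterate k hx) _ (hS_maps.iterate (k + 1) hx)
      _ ≤ t * (t ^ k * n (S x - x)) := mul_le_mul_of_nonneg_left ih ht
      _ = t ^ (k + 1) * n (S x - x) := by ring

variable [Module ℝ X]

lemma exists_sub_le_of_averaging (h_hom : ∀ l : ℝ, 0 ≤ l → ∀ x, n (l • x) = l * n x)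
    (h_sub : ∀ x y, n (x + y) ≤ n x + n y) {K : Set X} (hK_conv : Convex ℝ K) {T : X → X}
    (hT_maps : Set.MapsTo T K K) (hT_nonexp : ∀ x ∈ K, ∀ y ∈ K, n (T y - T x) ≤ n (y - x))
    {x₀ : X} (hx₀ : x₀ ∈ K) {M : ℝ} (hM : ∀ x ∈ K, n (x - x₀) ≤ M)
    {t : ℝ} (ht0 : 0 ≤ t) (ht1 : t ≤ 1) (k : ℕ) :
    ∃ x ∈ K, n (T x - x) ≤ (1 - t) * M + t ^ k * M := by
  set S : X → X := fun x => (1 - t) • x₀ + t • T x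
  have hS_maps : Set.MapsTo S K K := fun x hx =>
    hK_conv hx₀ (hT_maps hx) (by linarith) ht0 (by ring)
  have hS_contr : ∀ x ∈ K, ∀ y ∈ K, n (S y - S x) ≤ t * n (y - x) := by
    intro x hx y hy
    have : S y - S x = t • (T y - T x) := by simp only [S]; module
    rw [this, h_hom t ht0]
    exact mul_le_mul_of_nonneg_left (hT_nonexp x hx y hy) ht0
  set u := S^[k] x₀
  have hu : u ∈ K := hS_maps.iterate k hx₀
  have hTS : n (T u - S u) ≤ (1 - t) * M := by
    have : T u - S u = (1 - t) • (T u - x₀) := by simp only [S]; module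
    rw [this, h_hom _ (by linarith)]
    exact mul_le_mul_of_nonneg_left (hM _ (hT_maps hu)) (by linarith)
  have hSu : n (S u - u) ≤ t ^ k * M := by
    have := iterate_succ_sub_iterate_le ht0 hS_maps hS_contr hx₀ k
    rw [Function.iterate_succ_apply'] at this
    exact this.trans (mul_le_mul_of_nonneg_left (hM _ (hS_maps hx₀)) (pow_nonneg ht0 k))
  refine ⟨u, hu, ?_⟩
  calc n (T u - u) = n ((T u - S u) + (S u - u)) := by rw [sub_add_sub_cancel]
    _ ≤ n (T u - S u) + n (S u - u) := h_sub _ _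
    _ ≤ (1 - t) * M + t ^ k * M := add_le_add hTS hSu

lemma exists_sub_lt_of_nonexpansive (h_hom : ∀ l : ℝ, 0 ≤ l → ∀ x, n (l • x) = l * n x)
    (h_sub : ∀ x y, n (x + y) ≤ n x + n y) {K : Set X} (hK_conv : Convex ℝ K) {T : X → X}
    (hT_maps : Set.MapsTo T K K) (hT_nonexp : ∀ x ∈ K, ∀ y ∈ K, n (T y - T x) ≤ n (y - x))
    {x₀ : X} (hx₀ : x₀ ∈ K) {M : ℝ} (hM : ∀ x ∈ K, n (x - x₀) ≤ M) {ε : ℝ} (hε : 0 < ε) :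
    ∃ x ∈ K, n (T x - x) < ε := by
  have hn0 : n 0 = 0 := by simpa using h_hom 0 le_rfl 0
  obtain ⟨t, ht0, ht1, k, hk⟩ :=
    exists_one_sub_mul_add_pow_mul_lt (by simpa [hn0] using hM x₀ hx₀) hε
  obtain ⟨x, hx, hTx⟩ := exists_sub_le_of_averaging h_hom h_sub hK_conv hT_maps hT_nonexp hx₀ hM
    ht0 ht1 k
  exact ⟨x, hx, hTx.trans_lt hk⟩

end AsymmetricNorm

theorem fixedPoint_of_TminusI_closed_general {X : Type*} [AddCommGroup X] [Module ℝ X]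
    (n : X → ℝ)
    (h_hom : ∀ (l : ℝ), 0 ≤ l → ∀ x, n (l • x) = l * n x)
    (h_sub : ∀ x y, n (x + y) ≤ n x + n y)
    (tf : TopologicalSpace X)
    (htf : tf = TopologicalSpace.generateFrom
      {s : Set X | ∃ x r, s = {u | n (u - x) < r}})
    (K : Set X) (hK_ne : K.Nonempty) (hK_conv : Convex ℝ K)
    (hK_bdd : ∃ x r, K ⊆ {u | n (u - x) < r})
    (T : X → X) (hT_maps : Set.MapsTo T K K)
    (hT_nonexp : ∀ x ∈ K, ∀ y ∈ K, n (T y - T x) ≤ n (y - x))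
    (h_TI_closed : @IsClosed X tf ((fun x => T x - x) '' K)) :
    ∃ x ∈ K, T x = x := by
  subst htf
  obtain ⟨x₀, hx₀⟩ := hK_ne
  obtain ⟨c, r, hKr⟩ := hK_bdd
  have hM : ∀ x ∈ K, n (x - x₀) ≤ r + n (c - x₀) := fun x hx => by
    have := h_sub (x - c) (c - x₀)
    rw [sub_add_sub_cancel] at this
    linarith [show n (x - c) < r from hKr hx]
  have hzero : (0 : X) ∈ (fun x => T x - x) '' K :=
    mem_of_isClosed_forwardTopology h_sub h_TI_closed fun ε hε => by
      obtain ⟨x, hx, hTx⟩ :=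
        exists_sub_lt_of_nonexpansive h_hom h_sub hK_conv hT_maps hT_nonexp hx₀ hM hε
      exact ⟨T x - x, ⟨x, hx, rfl⟩, by rwa [sub_zero]⟩
  obtain ⟨x, hx, hTx⟩ := hzero
  exact ⟨x, hx, sub_eq_zero.mp hTx⟩

/-- in an f-Banach asymmetric normed space where f-convergence
implies b-convergence, an f-non-expansive self-map T of a nonempty convex
f-closed f-bounded set K with (T−I)(K) f-closed has a fixed point. -/
theorem fixedPoint_of_TminusI_closed {X : Type*} [AddCommGroup X] [Module ℝ X]
    (n : X → ℝ)
    (h_nonneg : ∀ x, 0 ≤ n x)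
    (h_eq : ∀ x, (n x = 0 ∧ n (-x) = 0) ↔ x = 0)
    (h_hom : ∀ (l : ℝ), 0 ≤ l → ∀ x, n (l • x) = l * n x)
    (h_sub : ∀ x y, n (x + y) ≤ n x + n y)
    (tf : TopologicalSpace X)
    (htf : tf = TopologicalSpace.generateFrom
      {s : Set X | ∃ x r, s = {u | n (u - x) < r}})
    (h_complete : ∀ u : ℕ → X,
      (∀ ε > 0, ∃ N, ∀ m k, N ≤ k → k ≤ m → n (u m - u k) < ε) →
      ∃ x, Tendsto (fun k => n (u k - x)) atTop (𝓝 0))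
    (h_fb : ∀ (u : ℕ → X) (x : X),
      Tendsto (fun k => n (u k - x)) atTop (𝓝 0) →
      Tendsto (fun k => n (x - u k)) atTop (𝓝 0))
    (K : Set X) (hK_ne : K.Nonempty) (hK_conv : Convex ℝ K)
    (hK_closed : @IsClosed X tf K)
    (hK_bdd : ∃ x r, K ⊆ {u | n (u - x) < r})
    (T : X → X) (hT_maps : Set.MapsTo T K K)
    (hT_nonexp : ∀ x ∈ K, ∀ y ∈ K, n (T y - T x) ≤ n (y - x))
    (h_TI_closed : @IsClosed X tf ((fun x => T x - x) '' K)) :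
    ∃ x ∈ K, T x = x :=
  fixedPoint_of_TminusI_closed_general n h_hom h_sub tf htf K hK_ne hK_conv hK_bdd T hT_maps
    hT_nonexp h_TI_closed
end

section
/- Let X be an f-Banach asymmetric normed space, and let K ⊆ X be a nonempty, convex, f-closed, f-bounded, T-invariant subset, where T : K → K is f-non-expansive, and suppose f-convergence implies b-convergence. Then there exists a sequence {x_n} ⊆ K with ‖Tx_n − x_n| → 0 (a fixed-point f-approximating sequence for T). -/
open Filter Topology

private def apxSeq {X : Type*} [AddCommGroup X] [Module ℝ X]
    (x₀ : X) (t : ℝ) (T : X → X) : ℕ → X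
  | 0 => x₀
  | k + 1 => (1 - t) • x₀ + t • T (apxSeq x₀ t T k)

/-- existence of a fixed-point f-approximating sequence for an
f-non-expansive self-map of a nonempty convex f-closed f-bounded subset of an
f-Banach asymmetric normed space, assuming f-convergence implies
b-convergence. -/
theorem exists_fApproximating_sequence {X : Type*} [AddCommGroup X] [Module ℝ X]
    (n : X → ℝ)
    (h_nonneg : ∀ x, 0 ≤ n x)
    (h_eq : ∀ x, (n x = 0 ∧ n (-x) = 0) ↔ x = 0)
    (h_hom : ∀ (l : ℝ), 0 ≤ l → ∀ x, n (l • x) = l * n x)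
    (h_sub : ∀ x y, n (x + y) ≤ n x + n y)
    (tf : TopologicalSpace X)
    (htf : tf = TopologicalSpace.generateFrom
      {s : Set X | ∃ x r, s = {u | n (u - x) < r}})
    (h_complete : ∀ u : ℕ → X,
      (∀ ε > 0, ∃ N, ∀ m k, N ≤ k → k ≤ m → n (u m - u k) < ε) →
      ∃ x, Tendsto (fun k => n (u k - x)) atTop (𝓝 0))
    (h_fb : ∀ (u : ℕ → X) (x : X),
      Tendsto (fun k => n (u k - x)) atTop (𝓝 0) →
      Tendsto (fun k => n (x - u k)) atTop (𝓝 0))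
    (K : Set X) (hK_ne : K.Nonempty) (hK_conv : Convex ℝ K)
    (hK_closed : @IsClosed X tf K)
    (hK_bdd : ∃ x r, K ⊆ {u | n (u - x) < r})
    (T : X → X) (hT_maps : Set.MapsTo T K K)
    (hT_nonexp : ∀ x ∈ K, ∀ y ∈ K, n (T y - T x) ≤ n (y - x)) :
    ∃ u : ℕ → X, (∀ k, u k ∈ K) ∧
      Tendsto (fun k => n (T (u k) - u k)) atTop (𝓝 0) := by
  obtain ⟨x₀, hx₀⟩ := hK_ne
  obtain ⟨x, r, hball⟩ := hK_bdd
  -- key: approximate fixed points at every scale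
  have key : ∀ ε > (0:ℝ), ∃ z ∈ K, n (T z - z) < ε := by
    intro ε hε
    set C : ℝ := r + n (x - x₀) with hCdef
    have hr : 0 < r := lt_of_le_of_lt (h_nonneg (x₀ - x)) (hball hx₀)
    have hC : 0 < C := by have := h_nonneg (x - x₀); linarith
    set t : ℝ := max 0 (1 - ε / (2 * C)) with htdef
    have ht0 : 0 ≤ t := le_max_left _ _
    have ht1 : t < 1 := by
      have : ε / (2 * C) > 0 := by positivity
      apply max_lt <;> linarith
    have h1t : 1 - t ≤ ε / (2 * C) := by
      have := le_max_right 0 (1 - ε / (2 * C)); linarith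
    set D : ℝ := n (T x₀ - x₀) with hDdef
    have hD : 0 ≤ D := h_nonneg _
    set u : ℕ → X := apxSeq x₀ t T with hu
    have hmem : ∀ k, u k ∈ K := by
      intro k
      induction k with
      | zero => exact hx₀
      | succ k ih =>
        exact hK_conv hx₀ (hT_maps ih) (by linarith) ht0 (by ring)
    have hstep : ∀ k, n (u (k + 1) - u k) ≤ t ^ k * D := by
      intro k
      induction k with
      | zero =>
        have h1 : u 1 - u 0 = t • (T x₀ - x₀) := by
          simp only [hu, apxSeq]; module
        rw [h1, h_hom t ht0]
        nlinarith
      | succ k ih =>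
        have h1 : u (k + 2) - u (k + 1) = t • (T (u (k + 1)) - T (u k)) := by
          show apxSeq x₀ t T (k+2) - apxSeq x₀ t T (k+1)
            = t • (T (apxSeq x₀ t T (k+1)) - T (apxSeq x₀ t T k))
          simp only [apxSeq]; module
        rw [h1, h_hom t ht0]
        have h2 : n (T (u (k + 1)) - T (u k)) ≤ n (u (k + 1) - u k) :=
          hT_nonexp _ (hmem k) _ (hmem (k + 1))
        calc t * n (T (u (k + 1)) - T (u k)) ≤ t * (t ^ k * D) := by
              apply mul_le_mul_of_nonneg_left (le_trans h2 ih) ht0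
          _ = t ^ (k + 1) * D := by ring
    have hbound : ∀ k, n (T (u k) - u k) ≤ (1 - t) * C + t ^ k * D := by
      intro k
      have hd : T (u k) - u k = ((1 - t) • (T (u k) - x₀)) + (u (k + 1) - u k) := by
        show T (u k) - u k
          = ((1 - t) • (T (u k) - x₀)) + (apxSeq x₀ t T (k+1) - apxSeq x₀ t T k)
        simp only [apxSeq]
        show T (u k) - u k
          = ((1 - t) • (T (u k) - x₀)) + (((1 - t) • x₀ + t • T (u k)) - u k)
        module
      rw [hd]
      have h1 := h_sub ((1 - t) • (T (u k) - x₀)) (u (k + 1) - u k)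
      rw [h_hom (1 - t) (by linarith)] at h1
      have h2 : n (T (u k) - x₀) ≤ C := by
        have h3 : T (u k) - x₀ = (T (u k) - x) + (x - x₀) := by abel
        rw [h3]
        have h4 := h_sub (T (u k) - x) (x - x₀)
        have h5 : n (T (u k) - x) < r := hball (hT_maps (hmem k))
        rw [hCdef]; linarith
      have h6 := hstep k
      nlinarith [mul_le_mul_of_nonneg_left h2 (by linarith : (0:ℝ) ≤ 1 - t)]
    -- choose k so that t ^ k * D < ε / 2
    have htend : Tendsto (fun k : ℕ => t ^ k * D) atTop (𝓝 0) := by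
      have := tendsto_pow_atTop_nhds_zero_of_lt_one ht0 ht1
      simpa using this.mul_const D
    have hev : ∀ᶠ k in atTop, t ^ k * D < ε / 2 :=
      htend.eventually (gt_mem_nhds (by linarith : (0:ℝ) < ε / 2))
    obtain ⟨k, hk⟩ := hev.exists
    refine ⟨u k, hmem k, ?_⟩
    have h7 : (1 - t) * C ≤ ε / 2 := by
      have := mul_le_mul_of_nonneg_right h1t (le_of_lt hC)
      rw [div_mul_eq_mul_div, mul_comm] at this
      calc (1 - t) * C ≤ ε * C / (2 * C) := by linarith
        _ = ε / 2 := by field_simp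
    calc n (T (u k) - u k) ≤ (1 - t) * C + t ^ k * D := hbound k
      _ < ε / 2 + ε / 2 := by linarith
      _ = ε := by ring
  -- diagonalize
  have hchoice : ∀ m : ℕ, ∃ z, z ∈ K ∧ n (T z - z) < 1 / (m + 1) := by
    intro m
    obtain ⟨z, hz, hz'⟩ := key (1 / (m + 1)) (by positivity)
    exact ⟨z, hz, hz'⟩
  choose z hzK hzlt using hchoice
  refine ⟨z, hzK, ?_⟩
  apply squeeze_zero (fun m => h_nonneg _) (fun m => le_of_lt (hzlt m))
  exact tendsto_one_div_add_atTop_nhds_zero_nat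
end
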